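/- arXiv:1906.05988 — 4 statements merged into one kernel-verified Lean document; each statement's English description precedes it below -/
import Mathlib

section
/- A Borel probability measure ν on ℝ^{S×Z} with ν(Δ(S×Z)) = 1 satisfies ∫ |p − p̄| dν(p) ≤ c componentwise (where |·| is the componentwise absolute value; the integral exists since the integrand is bounded on Δ(S×Z)) if and only if there exists a Borel probability measure μ̃ on ℝ^{S×Z} × ℝ^{S×Z} with μ̃(X̃) = 1, whose u-coordinate is integrable with ∫ u dμ̃ = c, and whose pushforward under the projection (p,u) ↦ p equals ν. In other words, the mean-absolute-deviation condition E[|p − p̄|] ≤ c is exactly characterized by membership of the lifted distribution in the moment-based ambiguity set. -/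
open MeasureTheory

section Defs

variable {S Z A : Type*}

/-- Observation weight `n_z(b,p) = Σ_s Σ_{s'} p_s(s',z) b_s`. -/
def obsW [Fintype S] (b : S → ℝ) (p : S → (S × Z) → ℝ) (z : Z) : ℝ :=
  ∑ s, ∑ s', p s (s', z) * b s

/-- Bayesian belief update `f(b,p,z)`. -/
noncomputable def bUpd [Fintype S] (b : S → ℝ) (p : S → (S × Z) → ℝ) (z : Z) : S → ℝ :=
  fun s' => (∑ s, p s (s', z) * b s) / obsW b p z

/-- The support set `X̃_{as}`. -/
def XasSet [Fintype S] [Fintype Z] (pbar : (S × Z) → ℝ) :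
    Set (((S × Z) → ℝ) × ((S × Z) → ℝ)) :=
  {x | (∀ i, x.1 i - pbar i ≤ x.2 i) ∧ (∀ i, pbar i - x.1 i ≤ x.2 i) ∧
       x.1 ∈ stdSimplex ℝ (S × Z)}

/-- The box uncertainty set `B_{as}`. -/
def BasSet [Fintype S] [Fintype Z] (pbar c : (S × Z) → ℝ) : Set ((S × Z) → ℝ) :=
  {p | p ∈ stdSimplex ℝ (S × Z) ∧ ∀ i, |p i - pbar i| ≤ c i}

/-- The ambiguity set `D̃_{as}`. -/
def DasSet [Fintype S] [Fintype Z] (pbar c : (S × Z) → ℝ) :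
    Set (Measure (((S × Z) → ℝ) × ((S × Z) → ℝ))) :=
  {μ | IsProbabilityMeasure μ ∧ μ (XasSet pbar) = 1 ∧
       Integrable (fun x => x.2) μ ∧ (∫ x, x.2 ∂μ) = c}

/-- The product ambiguity set `D̃_a = ⊗_s D̃_{as}`. -/
def DaSet [Fintype S] [Fintype Z] (pbar c : S → (S × Z) → ℝ) :
    Set (Measure (S → ((S × Z) → ℝ) × ((S × Z) → ℝ))) :=
  {μ | ∃ ν : S → Measure (((S × Z) → ℝ) × ((S × Z) → ℝ)),
    (∀ s, ν s ∈ DasSet (pbar s) (c s)) ∧ μ = Measure.pi ν}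

/-- The term `n_z(b,p) V(f(b,p,z))`, with the convention that it is `0` when `n_z(b,p) = 0`. -/
noncomputable def bTerm [Fintype S] (V : (S → ℝ) → ℝ) (b : S → ℝ)
    (p : S → (S × Z) → ℝ) (z : Z) : ℝ :=
  if obsW b p z = 0 then 0 else obsW b p z * V (bUpd b p z)

/-- `U_V(b,a,μ̃)`. -/
noncomputable def UVal [Fintype S] [Fintype Z] (r : A → S → ℝ) (β : ℝ)
    (V : (S → ℝ) → ℝ) (b : S → ℝ) (a : A)
    (μ : Measure (S → ((S × Z) → ℝ) × ((S × Z) → ℝ))) : ℝ :=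
  ∫ x, ((∑ s, b s * r a s) + β * ∑ z, bTerm V b (fun s => (x s).1) z) ∂μ

/-- The distributionally robust Bellman operator `L`. -/
noncomputable def Lop [Fintype S] [Fintype Z] [Fintype A]
    (pbar c : A → S → (S × Z) → ℝ) (r : A → S → ℝ) (β : ℝ)
    (V : (S → ℝ) → ℝ) (b : S → ℝ) : ℝ :=
  ⨆ a : A, sInf ((fun μ => UVal r β V b a μ) '' DaSet (pbar a) (c a))

end Defs

/-!
On the simplex the deviation `|p - p̄|` is bounded, so its mean `m := E_ν|p - p̄|` is finite.
If `m ≤ c`, lifting `p` to `(p, |p - p̄| + (c - m))` pushes `ν` to a measure on `X̃` whose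
`u`-coordinate has mean exactly `c`; the slack `c - m ≥ 0` keeps the lift inside `X̃`.
Conversely, the constraints of `X̃` say `|p - p̄| ≤ u`, so `E|p - p̄| ≤ E u = c`.
-/

lemma ae_mem_iff_measure_eq_one {X : Type*} [MeasurableSpace X] {μ : Measure X}
    [IsProbabilityMeasure μ] {s : Set X} (hs : NullMeasurableSet s μ) :
    (∀ᵐ x ∂μ, x ∈ s) ↔ μ s = 1 := by
  rw [ae_mem_iff_measure_eq hs, measure_univ]

lemma Continuous.integrable_of_ae_mem_isCompact {X E : Type*} [TopologicalSpace X] [T2Space X]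
    [MeasurableSpace X] [OpensMeasurableSpace X] [NormedAddCommGroup E] {μ : Measure X}
    [IsFiniteMeasure μ] {K : Set X} (hK : IsCompact K) (hμK : ∀ᵐ x ∂μ, x ∈ K) {f : X → E}
    (hf : Continuous f) : Integrable f μ := by
  rw [← Measure.restrict_eq_self_of_ae_mem hμK]
  exact hf.continuousOn.integrableOn_compact hK

section Deviation

variable {ι : Type*}

lemma continuous_abs_sub_const (a : ι → ℝ) : Continuous fun q : ι → ℝ => |q - a| :=
  continuous_pi fun i => ((continuous_apply i).sub continuous_const).abs

def madLift (pbar d : ι → ℝ) (q : ι → ℝ) : (ι → ℝ) × (ι → ℝ) :=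
  (q, |q - pbar| + d)

lemma continuous_madLift (pbar d : ι → ℝ) : Continuous (madLift pbar d) :=
  continuous_id.prodMk ((continuous_abs_sub_const pbar).add continuous_const)

variable [Fintype ι]

lemma integrable_abs_sub_of_ae_mem_stdSimplex (a : ι → ℝ) {ν : Measure (ι → ℝ)}
    [IsFiniteMeasure ν] (hν : ∀ᵐ q ∂ν, q ∈ stdSimplex ℝ ι) :
    Integrable (fun q => |q - a|) ν :=
  (continuous_abs_sub_const a).integrable_of_ae_mem_isCompact (isCompact_stdSimplex ℝ ι) hν

lemma map_fst_map_madLift (pbar d : ι → ℝ) (ν : Measure (ι → ℝ)) :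
    (ν.map (madLift pbar d)).map Prod.fst = ν := by
  rw [Measure.map_map measurable_fst (continuous_madLift pbar d).measurable]
  exact Measure.map_id

variable {ν : Measure (ι → ℝ)} {pbar : ι → ℝ}

lemma integrable_snd_map_madLift [IsFiniteMeasure ν] (hν : ∀ᵐ q ∂ν, q ∈ stdSimplex ℝ ι)
    (d : ι → ℝ) : Integrable (fun x => x.2) (ν.map (madLift pbar d)) := by
  rw [integrable_map_measure (by fun_prop) (continuous_madLift pbar d).aemeasurable]
  exact (integrable_abs_sub_of_ae_mem_stdSimplex pbar hν).add (integrable_const d)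

lemma integral_snd_map_madLift [IsProbabilityMeasure ν] (hν : ∀ᵐ q ∂ν, q ∈ stdSimplex ℝ ι)
    (d : ι → ℝ) : ∫ x, x.2 ∂(ν.map (madLift pbar d)) = (∫ q, |q - pbar| ∂ν) + d := by
  rw [integral_map (continuous_madLift pbar d).aemeasurable (by fun_prop)]
  simp only [madLift]
  rw [integral_add (integrable_abs_sub_of_ae_mem_stdSimplex pbar hν) (integrable_const d),
    integral_const, probReal_univ, one_smul]

end Deviation

section LiftedSupport

variable {S Z : Type*} [Fintype S] [Fintype Z] {pbar : S × Z → ℝ}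

lemma mem_XasSet_iff {x : (S × Z → ℝ) × (S × Z → ℝ)} :
    x ∈ XasSet pbar ↔ |x.1 - pbar| ≤ x.2 ∧ x.1 ∈ stdSimplex ℝ (S × Z) := by
  simp only [XasSet, Set.mem_ofPred_eq, Pi.le_def, Pi.abs_apply, Pi.sub_apply, abs_sub_le_iff,
    forall_and, and_assoc]

lemma isClosed_XasSet (pbar : S × Z → ℝ) : IsClosed (XasSet pbar) := by
  have h : XasSet pbar = {x | |x.1 - pbar| ≤ x.2} ∩ Prod.fst ⁻¹' stdSimplex ℝ (S × Z) := by
    ext x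
    exact mem_XasSet_iff
  rw [h]
  exact (isClosed_le ((continuous_abs_sub_const pbar).comp continuous_fst) continuous_snd).inter
    ((isClosed_stdSimplex ℝ _).preimage continuous_fst)

lemma madLift_mem_XasSet {d q : S × Z → ℝ} (hd : 0 ≤ d) (hq : q ∈ stdSimplex ℝ (S × Z)) :
    madLift pbar d q ∈ XasSet pbar :=
  mem_XasSet_iff.2 ⟨le_add_of_nonneg_right hd, hq⟩

lemma map_madLift_XasSet_eq_one {ν : Measure (S × Z → ℝ)} [IsProbabilityMeasure ν]
    (hν : ∀ᵐ q ∂ν, q ∈ stdSimplex ℝ (S × Z)) {d : S × Z → ℝ} (hd : 0 ≤ d) :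
    ν.map (madLift pbar d) (XasSet pbar) = 1 := by
  have : IsProbabilityMeasure (ν.map (madLift pbar d)) :=
    Measure.isProbabilityMeasure_map (continuous_madLift pbar d).aemeasurable
  refine (ae_mem_iff_measure_eq_one (isClosed_XasSet pbar).measurableSet.nullMeasurableSet).1 ?_
  refine (ae_map_iff (continuous_madLift pbar d).aemeasurable
    (isClosed_XasSet pbar).measurableSet).2 ?_
  filter_upwards [hν] with q hq using madLift_mem_XasSet hd hq

lemma integral_abs_sub_map_fst_le {μ : Measure ((S × Z → ℝ) × (S × Z → ℝ))}
    (hX : ∀ᵐ x ∂μ, x ∈ XasSet pbar) (hu : Integrable (fun x => x.2) μ) (i : S × Z) :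
    ∫ q, |q i - pbar i| ∂(μ.map Prod.fst) ≤ (∫ x, x.2 ∂μ) i := by
  rw [integral_map measurable_fst.aemeasurable
      (((continuous_apply i).sub continuous_const).abs.aestronglyMeasurable),
    eval_integral hu.eval]
  refine integral_mono_of_nonneg (ae_of_all _ fun _ => abs_nonneg _) (hu.eval i) ?_
  filter_upwards [hX] with x hx using (mem_XasSet_iff.1 hx).1 i

end LiftedSupport

theorem mad_iff_lifted_ambiguity_member_general {S Z : Type*} [Fintype S] [Fintype Z]
    (pbar : (S × Z) → ℝ) (c : (S × Z) → ℝ)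
    (ν : Measure ((S × Z) → ℝ)) [IsProbabilityMeasure ν]
    (hν : ν (stdSimplex ℝ (S × Z)) = 1) :
    (∀ i, (∫ q, |q i - pbar i| ∂ν) ≤ c i) ↔
      ∃ μ : Measure (((S × Z) → ℝ) × ((S × Z) → ℝ)),
        IsProbabilityMeasure μ ∧ μ (XasSet pbar) = 1 ∧
        Integrable (fun x => x.2) μ ∧ (∫ x, x.2 ∂μ) = c ∧
        μ.map Prod.fst = ν := by
  have hνΔ : ∀ᵐ q ∂ν, q ∈ stdSimplex ℝ (S × Z) :=
    (ae_mem_iff_measure_eq_one (isClosed_stdSimplex ℝ _).measurableSet.nullMeasurableSet).2 hν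
  constructor
  · intro hmad
    set m := ∫ q, |q - pbar| ∂ν
    have hslack : 0 ≤ c - m := fun i => by
      have hmi : m i = ∫ q, |q i - pbar i| ∂ν :=
        eval_integral (integrable_abs_sub_of_ae_mem_stdSimplex pbar hνΔ).eval i
      exact sub_nonneg.2 (hmi ▸ hmad i)
    refine ⟨ν.map (madLift pbar (c - m)),
      Measure.isProbabilityMeasure_map (continuous_madLift _ _).aemeasurable,
      map_madLift_XasSet_eq_one hνΔ hslack, integrable_snd_map_madLift hνΔ _, ?_,
      map_fst_map_madLift _ _ _⟩
    rw [integral_snd_map_madLift hνΔ, add_sub_cancel]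
  · rintro ⟨μ, hμ, hX, hu, hmean, rfl⟩ i
    rw [← hmean]
    exact integral_abs_sub_map_fst_le
      ((ae_mem_iff_measure_eq_one (isClosed_XasSet pbar).measurableSet.nullMeasurableSet).2 hX)
      hu i

/-- A Borel probability measure `ν` on `ℝ^{S×Z}` concentrated on the simplex
satisfies the componentwise mean-absolute-deviation bound `∫ |p − p̄| dν ≤ c` if and only if
there is a lifted Borel probability measure `μ̃` on `ℝ^{S×Z} × ℝ^{S×Z}` concentrated on `X̃`,
with integrable `u`-coordinate of mean `c`, whose marginal on the `p`-coordinate is `ν`. -/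
theorem mad_iff_lifted_ambiguity_member {S Z : Type*} [Fintype S] [Nonempty S]
    [Fintype Z] [Nonempty Z]
    (pbar : (S × Z) → ℝ) (hpbar : pbar ∈ stdSimplex ℝ (S × Z))
    (c : (S × Z) → ℝ) (hc : ∀ i, 0 ≤ c i)
    (ν : Measure ((S × Z) → ℝ)) [IsProbabilityMeasure ν]
    (hν : ν (stdSimplex ℝ (S × Z)) = 1) :
    (∀ i, (∫ q, |q i - pbar i| ∂ν) ≤ c i) ↔
      ∃ μ : Measure (((S × Z) → ℝ) × ((S × Z) → ℝ)),
        IsProbabilityMeasure μ ∧ μ (XasSet pbar) = 1 ∧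
        Integrable (fun x => x.2) μ ∧ (∫ x, x.2 ∂μ) = c ∧
        μ.map Prod.fst = ν :=
  mad_iff_lifted_ambiguity_member_general pbar c ν hν
end

section
/- For any bounded Borel functions V1, V2 : Δ(S) → ℝ and every b ∈ Δ(S), |(LV1)(b) − (LV2)(b)| ≤ β · sup_{b' ∈ Δ(S)} |V1(b') − V2(b')|. Consequently, for 0 < β < 1 the distributionally robust Bellman operator L is a contraction with modulus β with respect to the supremum distance on bounded Borel functions on Δ(S). -/
open MeasureTheory

/-
For a fixed action `a` and measure `μ`, the two values `U_{V1}(b,a,μ)` and `U_{V2}(b,a,μ)` differ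
only through `β Σ_z n_z (V1 - V2)(f(b,p,z))`. Almost surely every sampled `p_s` is a probability
vector, so the weights `n_z` form a probability vector and the updated beliefs stay in `Δ(S)`;
hence the difference is at most `β · sup |V1 - V2|`. Infima over the (nonempty) ambiguity sets
and maxima over the finitely many actions are 1-Lipschitz for the sup distance, which transfers
the bound to `L`.
-/

open Set

section InfSupLipschitz

lemma csInf_image_le_csInf_image_add {α : Type*} {D : Set α} (hD : D.Nonempty) {f g : α → ℝ}
    {ε : ℝ} (hf : BddBelow (f '' D)) (h : ∀ x ∈ D, f x ≤ g x + ε) :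
    sInf (f '' D) ≤ sInf (g '' D) + ε := by
  rw [← sub_le_iff_le_add]
  refine le_csInf (hD.image g) ?_
  rintro _ ⟨x, hx, rfl⟩
  linarith [csInf_le hf (mem_image_of_mem f hx), h x hx]

lemma abs_csInf_image_sub_csInf_image_le {α : Type*} {D : Set α} (hD : D.Nonempty)
    {f g : α → ℝ} {ε : ℝ} (hf : BddBelow (f '' D)) (hg : BddBelow (g '' D))
    (h : ∀ x ∈ D, |f x - g x| ≤ ε) : |sInf (f '' D) - sInf (g '' D)| ≤ ε := by
  have hfg := csInf_image_le_csInf_image_add (g := g) hD hf fun x hx => by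
    linarith [(abs_sub_le_iff.1 (h x hx)).1]
  have hgf := csInf_image_le_csInf_image_add (g := f) hD hg fun x hx => by
    linarith [(abs_sub_le_iff.1 (h x hx)).2]
  exact abs_sub_le_iff.2 ⟨by linarith, by linarith⟩

lemma ciSup_le_ciSup_add {ι : Type*} [Nonempty ι] {f g : ι → ℝ} {ε : ℝ}
    (hg : BddAbove (range g)) (h : ∀ i, f i ≤ g i + ε) : ⨆ i, f i ≤ (⨆ i, g i) + ε :=
  ciSup_le fun i => (h i).trans (add_le_add_left (le_ciSup hg i) ε)

lemma abs_ciSup_sub_ciSup_le {ι : Type*} [Finite ι] [Nonempty ι] {f g : ι → ℝ} {ε : ℝ}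
    (h : ∀ i, |f i - g i| ≤ ε) : |(⨆ i, f i) - ⨆ i, g i| ≤ ε := by
  have hfg := ciSup_le_ciSup_add (f := f) (finite_range g).bddAbove fun i => by
    linarith [(abs_sub_le_iff.1 (h i)).1]
  have hgf := ciSup_le_ciSup_add (f := g) (finite_range f).bddAbove fun i => by
    linarith [(abs_sub_le_iff.1 (h i)).2]
  exact abs_sub_le_iff.2 ⟨by linarith, by linarith⟩

end InfSupLipschitz

section BeliefUpdate

variable {S Z : Type*} [Fintype S] [Fintype Z] {b : S → ℝ} {p : S → S × Z → ℝ}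

lemma obsW_nonneg (hb : b ∈ stdSimplex ℝ S) (hp : ∀ s, p s ∈ stdSimplex ℝ (S × Z)) (z : Z) :
    0 ≤ obsW b p z :=
  Finset.sum_nonneg fun s _ => Finset.sum_nonneg fun _ _ => mul_nonneg ((hp s).1 _) (hb.1 s)

lemma sum_obsW_eq_one (hb : b ∈ stdSimplex ℝ S)
    (hp : ∀ s, p s ∈ stdSimplex ℝ (S × Z)) : ∑ z, obsW b p z = 1 := by
  have hrow : ∀ s, ∑ z : Z, ∑ s' : S, p s (s', z) = 1 := fun s => by
    rw [Finset.sum_comm, ← Fintype.sum_prod_type]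
    exact (hp s).2
  simp only [obsW, ← Finset.sum_mul]
  rw [Finset.sum_comm]
  simp only [← Finset.sum_mul, hrow, one_mul]
  exact hb.2

lemma bUpd_mem_stdSimplex (hb : b ∈ stdSimplex ℝ S) (hp : ∀ s, p s ∈ stdSimplex ℝ (S × Z))
    {z : Z} (hz : obsW b p z ≠ 0) : bUpd b p z ∈ stdSimplex ℝ S := by
  refine ⟨fun s' => div_nonneg (Finset.sum_nonneg fun s _ => mul_nonneg ((hp s).1 _) (hb.1 s))
    (obsW_nonneg hb hp z), ?_⟩
  change ∑ s', (∑ s, p s (s', z) * b s) / obsW b p z = 1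
  rw [← Finset.sum_div, Finset.sum_comm]
  exact div_self hz

lemma abs_sum_bTerm_sub_le (hb : b ∈ stdSimplex ℝ S)
    (hp : ∀ s, p s ∈ stdSimplex ℝ (S × Z)) {V₁ V₂ : (S → ℝ) → ℝ} {K : ℝ}
    (hK : ∀ b' ∈ stdSimplex ℝ S, |V₁ b' - V₂ b'| ≤ K) :
    |∑ z, bTerm V₁ b p z - ∑ z, bTerm V₂ b p z| ≤ K := by
  have hz : ∀ z, |bTerm V₁ b p z - bTerm V₂ b p z| ≤ obsW b p z * K := fun z => by
    by_cases h : obsW b p z = 0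
    · simp [bTerm, h]
    · rw [bTerm, bTerm, if_neg h, if_neg h, ← mul_sub, abs_mul,
        abs_of_nonneg (obsW_nonneg hb hp z)]
      exact mul_le_mul_of_nonneg_left (hK _ (bUpd_mem_stdSimplex hb hp h)) (obsW_nonneg hb hp z)
  calc |∑ z, bTerm V₁ b p z - ∑ z, bTerm V₂ b p z|
      ≤ ∑ z, |bTerm V₁ b p z - bTerm V₂ b p z| := by
        rw [← Finset.sum_sub_distrib]; exact Finset.abs_sum_le_sum_abs _ _
    _ ≤ ∑ z, obsW b p z * K := Finset.sum_le_sum fun z _ => hz z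
    _ = K := by rw [← Finset.sum_mul, sum_obsW_eq_one hb hp, one_mul]

lemma abs_sum_bTerm_le (hb : b ∈ stdSimplex ℝ S)
    (hp : ∀ s, p s ∈ stdSimplex ℝ (S × Z)) {V : (S → ℝ) → ℝ} {M : ℝ}
    (hM : ∀ b' ∈ stdSimplex ℝ S, |V b'| ≤ M) : |∑ z, bTerm V b p z| ≤ M := by
  simpa [bTerm] using abs_sum_bTerm_sub_le (V₂ := 0) hb hp (by simpa using hM)

end BeliefUpdate

section Measurability

variable {S Z : Type*} [Fintype S]

lemma measurable_obsW (b : S → ℝ) (z : Z) :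
    Measurable fun x : S → (S × Z → ℝ) × (S × Z → ℝ) => obsW b (fun s => (x s).1) z := by
  unfold obsW; fun_prop

lemma measurable_bUpd (b : S → ℝ) (z : Z) :
    Measurable fun x : S → (S × Z → ℝ) × (S × Z → ℝ) => bUpd b (fun s => (x s).1) z :=
  measurable_pi_lambda _ fun _ => by
    unfold bUpd
    exact Measurable.div (by fun_prop) (measurable_obsW b z)

lemma measurable_sum_bTerm [Fintype Z] {V : (S → ℝ) → ℝ} (hV : Measurable V) (b : S → ℝ) :
    Measurable fun x : S → (S × Z → ℝ) × (S × Z → ℝ) => ∑ z, bTerm V b (fun s => (x s).1) z :=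
  Finset.measurable_sum _ fun z _ =>
    Measurable.ite (measurable_obsW b z (measurableSet_singleton 0)) measurable_const
      ((measurable_obsW b z).mul (hV.comp (measurable_bUpd b z)))

lemma measurableSet_XasSet [Fintype Z] (pbar : S × Z → ℝ) : MeasurableSet (XasSet pbar) := by
  simp only [XasSet, ofPred_and, ofPred_forall]
  refine .inter (.iInter fun i => measurableSet_le ?_ ?_)
    (.inter (.iInter fun i => measurableSet_le ?_ ?_)
      (measurable_fst (isClosed_stdSimplex ℝ _).measurableSet)) <;> fun_prop

end Measurability

section AmbiguitySet

variable {S Z : Type*} [Fintype S] [Fintype Z] {pbar c : S → S × Z → ℝ}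
  {μ : Measure (S → (S × Z → ℝ) × (S × Z → ℝ))}

lemma isProbabilityMeasure_of_mem_DaSet (hμ : μ ∈ DaSet pbar c) : IsProbabilityMeasure μ := by
  obtain ⟨ν, hν, rfl⟩ := hμ
  have := fun s => (hν s).1
  infer_instance

lemma ae_mem_stdSimplex_of_mem_DaSet (hμ : μ ∈ DaSet pbar c) :
    ∀ᵐ x ∂μ, ∀ s, (x s).1 ∈ stdSimplex ℝ (S × Z) := by
  obtain ⟨ν, hν, rfl⟩ := hμ
  have := fun s => (hν s).1
  refine ae_all_iff.2 fun s => ?_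
  have hX : ∀ᵐ y ∂ν s, y ∈ XasSet (pbar s) :=
    (mem_ae_iff_prob_eq_one (measurableSet_XasSet _)).2 (hν s).2.1
  filter_upwards [Measure.tendsto_eval_ae_ae.eventually hX] with x hx using hx.2.2

lemma nonempty_DaSet (hpbar : ∀ s, pbar s ∈ stdSimplex ℝ (S × Z)) (hc : ∀ s i, 0 ≤ c s i) :
    (DaSet pbar c).Nonempty := by
  refine ⟨Measure.pi fun s => Measure.dirac (pbar s, c s), _, fun s => ?_, rfl⟩
  have hmem : (pbar s, c s) ∈ XasSet (pbar s) :=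
    ⟨fun i => by simpa using hc s i, fun i => by simpa using hc s i, hpbar s⟩
  refine ⟨inferInstance, Measure.dirac_apply_of_mem hmem, ?_, integral_dirac _ _⟩
  exact (integrable_const (c s)).congr
    (ae_eq_dirac fun x : (S × Z → ℝ) × (S × Z → ℝ) => x.2).symm

end AmbiguitySet

section ExpectedValue

variable {S Z A : Type*} [Fintype S] [Fintype Z] (r : A → S → ℝ) {β : ℝ} {b : S → ℝ}
  (a : A) {V : (S → ℝ) → ℝ} {M : ℝ} {pbar c : S → S × Z → ℝ}
  {μ : Measure (S → (S × Z → ℝ) × (S × Z → ℝ))}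

lemma ae_norm_UVal_integrand_le (hβ : 0 ≤ β) (hb : b ∈ stdSimplex ℝ S)
    (hM : ∀ b' ∈ stdSimplex ℝ S, |V b'| ≤ M) (hμ : μ ∈ DaSet pbar c) :
    ∀ᵐ x ∂μ, ‖(∑ s, b s * r a s) + β * ∑ z, bTerm V b (fun s => (x s).1) z‖ ≤
      |∑ s, b s * r a s| + β * M := by
  filter_upwards [ae_mem_stdSimplex_of_mem_DaSet hμ] with x hx
  rw [Real.norm_eq_abs]
  calc _ ≤ |∑ s, b s * r a s| + |β * ∑ z, bTerm V b (fun s => (x s).1) z| := abs_add_le _ _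
    _ ≤ |∑ s, b s * r a s| + β * M := by
      rw [abs_mul, abs_of_nonneg hβ]
      gcongr
      exact abs_sum_bTerm_le hb hx hM

lemma integrable_UVal_integrand (hβ : 0 ≤ β) (hb : b ∈ stdSimplex ℝ S) (hV : Measurable V)
    (hM : ∀ b' ∈ stdSimplex ℝ S, |V b'| ≤ M) (hμ : μ ∈ DaSet pbar c) :
    Integrable (fun x => (∑ s, b s * r a s) + β * ∑ z, bTerm V b (fun s => (x s).1) z) μ :=
  have := isProbabilityMeasure_of_mem_DaSet hμ
  .of_bound (measurable_const.add ((measurable_sum_bTerm hV b).const_mul β)).aestronglyMeasurable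
    _ (ae_norm_UVal_integrand_le r a hβ hb hM hμ)

lemma bddBelow_UVal_image (hβ : 0 ≤ β) (hb : b ∈ stdSimplex ℝ S)
    (hM : ∀ b' ∈ stdSimplex ℝ S, |V b'| ≤ M) :
    BddBelow ((fun μ => UVal r β V b a μ) '' DaSet pbar c) := by
  refine ⟨-(|∑ s, b s * r a s| + β * M), ?_⟩
  rintro _ ⟨μ, hμ, rfl⟩
  have := isProbabilityMeasure_of_mem_DaSet hμ
  have h := norm_integral_le_of_norm_le_const (ae_norm_UVal_integrand_le r a hβ hb hM hμ)
  rw [probReal_univ, mul_one, Real.norm_eq_abs] at h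
  exact neg_le_of_abs_le h

lemma abs_UVal_sub_le (hβ : 0 ≤ β) (hb : b ∈ stdSimplex ℝ S) {V₁ V₂ : (S → ℝ) → ℝ}
    (hV₁ : Measurable V₁) (hV₂ : Measurable V₂) {M₁ M₂ K : ℝ}
    (hM₁ : ∀ b' ∈ stdSimplex ℝ S, |V₁ b'| ≤ M₁) (hM₂ : ∀ b' ∈ stdSimplex ℝ S, |V₂ b'| ≤ M₂)
    (hK : ∀ b' ∈ stdSimplex ℝ S, |V₁ b' - V₂ b'| ≤ K) (hμ : μ ∈ DaSet pbar c) :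
    |UVal r β V₁ b a μ - UVal r β V₂ b a μ| ≤ β * K := by
  have := isProbabilityMeasure_of_mem_DaSet hμ
  rw [UVal, UVal, ← integral_sub (integrable_UVal_integrand r a hβ hb hV₁ hM₁ hμ)
    (integrable_UVal_integrand r a hβ hb hV₂ hM₂ hμ)]
  have hbound : ∀ᵐ x ∂μ, ‖((∑ s, b s * r a s) + β * ∑ z, bTerm V₁ b (fun s => (x s).1) z) -
      ((∑ s, b s * r a s) + β * ∑ z, bTerm V₂ b (fun s => (x s).1) z)‖ ≤ β * K := by
    filter_upwards [ae_mem_stdSimplex_of_mem_DaSet hμ] with x hx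
    rw [add_sub_add_left_eq_sub, ← mul_sub, Real.norm_eq_abs, abs_mul, abs_of_nonneg hβ]
    exact mul_le_mul_of_nonneg_left (abs_sum_bTerm_sub_le hb hx hK) hβ
  simpa using norm_integral_le_of_norm_le_const hbound

end ExpectedValue

lemma abs_Lop_sub_le {S Z A : Type*} [Fintype S] [Fintype Z] [Fintype A] [Nonempty A]
    {pbar c : A → S → S × Z → ℝ} (hpbar : ∀ a s, pbar a s ∈ stdSimplex ℝ (S × Z))
    (hc : ∀ a s i, 0 ≤ c a s i) (r : A → S → ℝ) {β : ℝ} (hβ : 0 ≤ β)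
    {V₁ V₂ : (S → ℝ) → ℝ} (hV₁ : Measurable V₁) (hV₂ : Measurable V₂) {M₁ M₂ K : ℝ}
    (hM₁ : ∀ b' ∈ stdSimplex ℝ S, |V₁ b'| ≤ M₁) (hM₂ : ∀ b' ∈ stdSimplex ℝ S, |V₂ b'| ≤ M₂)
    (hK : ∀ b' ∈ stdSimplex ℝ S, |V₁ b' - V₂ b'| ≤ K) {b : S → ℝ} (hb : b ∈ stdSimplex ℝ S) :
    |Lop pbar c r β V₁ b - Lop pbar c r β V₂ b| ≤ β * K :=
  abs_ciSup_sub_ciSup_le fun a =>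
    abs_csInf_image_sub_csInf_image_le (nonempty_DaSet (hpbar a) (hc a))
      (bddBelow_UVal_image r a hβ hb hM₁) (bddBelow_UVal_image r a hβ hb hM₂)
      fun _ hμ => abs_UVal_sub_le r a hβ hb hV₁ hV₂ hM₁ hM₂ hK hμ

theorem bellman_contraction_general {S Z A : Type*} [Fintype S]
    [Fintype Z] [Fintype A] [Nonempty A]
    (pbar c : A → S → (S × Z) → ℝ)
    (hpbar : ∀ a s, pbar a s ∈ stdSimplex ℝ (S × Z))
    (hc : ∀ a s i, 0 ≤ c a s i)
    (r : A → S → ℝ) (β : ℝ) (hβ0 : 0 < β)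
    (V1 V2 : (S → ℝ) → ℝ) (hV1m : Measurable V1) (hV2m : Measurable V2)
    (hV1b : ∃ M, ∀ b ∈ stdSimplex ℝ S, |V1 b| ≤ M)
    (hV2b : ∃ M, ∀ b ∈ stdSimplex ℝ S, |V2 b| ≤ M) :
    (∀ b ∈ stdSimplex ℝ S,
      |Lop pbar c r β V1 b - Lop pbar c r β V2 b| ≤
        β * sSup ((fun b' => |V1 b' - V2 b'|) '' stdSimplex ℝ S)) ∧
    sSup ((fun b => |Lop pbar c r β V1 b - Lop pbar c r β V2 b|) '' stdSimplex ℝ S) ≤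
      β * sSup ((fun b' => |V1 b' - V2 b'|) '' stdSimplex ℝ S) := by
  obtain ⟨M1, hM1⟩ := hV1b
  obtain ⟨M2, hM2⟩ := hV2b
  have hbdd : BddAbove ((fun b' => |V1 b' - V2 b'|) '' stdSimplex ℝ S) := by
    refine ⟨M1 + M2, ?_⟩
    rintro _ ⟨b', hb', rfl⟩
    exact (abs_sub _ _).trans (add_le_add (hM1 b' hb') (hM2 b' hb'))
  have hK : ∀ b' ∈ stdSimplex ℝ S,
      |V1 b' - V2 b'| ≤ sSup ((fun b' => |V1 b' - V2 b'|) '' stdSimplex ℝ S) :=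
    fun b' hb' => le_csSup hbdd (mem_image_of_mem _ hb')
  have hpointwise := fun b (hb : b ∈ stdSimplex ℝ S) =>
    abs_Lop_sub_le hpbar hc r hβ0.le hV1m hV2m hM1 hM2 hK hb
  refine ⟨hpointwise, Real.sSup_le ?_ (mul_nonneg hβ0.le (Real.sSup_nonneg ?_))⟩
  · rintro _ ⟨b, hb, rfl⟩
    exact hpointwise b hb
  · rintro _ ⟨b', -, rfl⟩
    exact abs_nonneg _

/-- For bounded Borel `V1, V2 : Δ(S) → ℝ` and every belief state `b ∈ Δ(S)`,
`|(LV1)(b) − (LV2)(b)| ≤ β · sup_{b' ∈ Δ(S)} |V1(b') − V2(b')|`; consequently, for `0 < β < 1`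
the distributionally robust Bellman operator is a contraction with modulus `β` in the
supremum distance. -/
theorem bellman_contraction {S Z A : Type*} [Fintype S] [Nonempty S]
    [Fintype Z] [Nonempty Z] [Fintype A] [Nonempty A]
    (pbar c : A → S → (S × Z) → ℝ)
    (hpbar : ∀ a s, pbar a s ∈ stdSimplex ℝ (S × Z))
    (hc : ∀ a s i, 0 ≤ c a s i)
    (r : A → S → ℝ) (β : ℝ) (hβ0 : 0 < β) (hβ1 : β < 1)
    (V1 V2 : (S → ℝ) → ℝ) (hV1m : Measurable V1) (hV2m : Measurable V2)
    (hV1b : ∃ M, ∀ b ∈ stdSimplex ℝ S, |V1 b| ≤ M)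
    (hV2b : ∃ M, ∀ b ∈ stdSimplex ℝ S, |V2 b| ≤ M) :
    (∀ b ∈ stdSimplex ℝ S,
      |Lop pbar c r β V1 b - Lop pbar c r β V2 b| ≤
        β * sSup ((fun b' => |V1 b' - V2 b'|) '' stdSimplex ℝ S)) ∧
    sSup ((fun b => |Lop pbar c r β V1 b - Lop pbar c r β V2 b|) '' stdSimplex ℝ S) ≤
      β * sSup ((fun b' => |V1 b' - V2 b'|) '' stdSimplex ℝ S) :=
  bellman_contraction_general pbar c hpbar hc r β hβ0 V1 V2 hV1m hV2m hV1b hV2b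
end

section
/- Fix a horizon T ≥ 1 and define value functions recursively by V^T ≡ 0 on Δ(S) and V^t = L V^{t+1} for t = T−1, T−2, ..., 1. Then each V^t is well-defined, bounded and Borel, and for every t ∈ {1,...,T} there exists a set Λ^t ⊆ ℝ^S of slopes such that V^t(b) = sup_{α∈Λ^t} ⟨α, b⟩ for all b ∈ Δ(S); in particular each V^t is a convex function of the belief state. -/
open MeasureTheory

/-!
Backward induction on `t`, with the invariant that on the simplex `V^t` is the support function
`b ↦ max_{α ∈ Λ} ⟨α, b⟩` of a nonempty compact convex set `Λ`.

For one Bellman step fix `a` and `b`. If `V` is the support function of `Λ`, the continuation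
term `Σ_z n_z V(f(b,p,z))` is the support function of a lifted slope set evaluated at the joint
weights `Σ_s b_s p_s`: positive homogeneity absorbs the normalisation by `n_z`. Sion's minimax
theorem gives a saddle point of `⟨v, Σ_s b_s q_s⟩`, with `q` ranging over the boxes `B_{as}` and
`v` over the lifted slopes. A product of Dirac masses at the saddle point attains the robust
infimum. For any other admissible measure the integrand dominates the linear functional given by
the saddle slope; its integral is evaluated at the means, and the means lie in the boxes. So the
value is `max_v Σ_s b_s min_{q ∈ B_{as}} ⟨v, q⟩`, a maximum of functions linear in `b` with
slopes `r_a + β min_{q ∈ B_{as}} ⟨v, q⟩`. The closed convex hull of their union over `a`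
restores the invariant.
-/

open Set

section SupportFunction

variable {ι : Type*} [Fintype ι]

noncomputable def supportFun (Λ : Set (ι → ℝ)) (x : ι → ℝ) : ℝ :=
  sSup ((· ⬝ᵥ x) '' Λ)

noncomputable def minDot (B : Set (ι → ℝ)) (v : ι → ℝ) : ℝ :=
  sInf ((v ⬝ᵥ ·) '' B)

variable {Λ B : Set (ι → ℝ)}

theorem isGreatest_supportFun (hΛ : IsCompact Λ) (hne : Λ.Nonempty) (x : ι → ℝ) :
    IsGreatest ((· ⬝ᵥ x) '' Λ) (supportFun Λ x) :=
  (hΛ.image (by fun_prop)).isGreatest_sSup (hne.image _)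

theorem dotProduct_le_supportFun (hΛ : IsCompact Λ) {α : ι → ℝ} (hα : α ∈ Λ) (x : ι → ℝ) :
    α ⬝ᵥ x ≤ supportFun Λ x :=
  le_csSup (hΛ.image (by fun_prop)).bddAbove (mem_image_of_mem _ hα)

theorem continuous_supportFun (hΛ : IsCompact Λ) : Continuous (supportFun Λ) :=
  hΛ.continuous_sSup (f := fun x α => α ⬝ᵥ x) (by fun_prop)

theorem supportFun_smul (hΛ : IsCompact Λ) (hne : Λ.Nonempty) {c : ℝ} (hc : 0 ≤ c)
    (x : ι → ℝ) : supportFun Λ (c • x) = c * supportFun Λ x := by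
  obtain ⟨⟨α, hα, hαx⟩, -⟩ := isGreatest_supportFun hΛ hne x
  refine (isGreatest_supportFun hΛ hne (c • x)).unique ⟨⟨α, hα, ?_⟩, ?_⟩
  · dsimp only at hαx ⊢
    rw [dotProduct_smul, hαx, smul_eq_mul]
  · rintro _ ⟨α', hα', rfl⟩
    dsimp only
    rw [dotProduct_smul, smul_eq_mul]
    exact mul_le_mul_of_nonneg_left (dotProduct_le_supportFun hΛ hα' x) hc

theorem convexOn_supportFun (hΛ : IsCompact Λ) (hne : Λ.Nonempty) :
    ConvexOn ℝ univ (supportFun Λ) := by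
  refine ⟨convex_univ, fun x _ y _ a b ha hb _ => ?_⟩
  obtain ⟨α, hα, hαxy⟩ := (isGreatest_supportFun hΛ hne (a • x + b • y)).1
  dsimp only at hαxy
  rw [← hαxy, dotProduct_add, dotProduct_smul, dotProduct_smul]
  gcongr <;> exact dotProduct_le_supportFun hΛ hα _

theorem isCompact_closedConvexHull (hΛ : IsCompact Λ) : IsCompact (closedConvexHull ℝ Λ) := by
  obtain ⟨R, hR⟩ := hΛ.isBounded.subset_closedBall 0
  exact (isCompact_closedBall 0 R).of_isClosed_subset isClosed_closedConvexHull
    (closedConvexHull_min hR (convex_closedBall 0 R) Metric.isClosed_closedBall)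

theorem supportFun_closedConvexHull (hΛ : IsCompact Λ) (hne : Λ.Nonempty) (x : ι → ℝ) :
    supportFun (closedConvexHull ℝ Λ) x = supportFun Λ x := by
  have hhull : closedConvexHull ℝ Λ ⊆ {α | α ⬝ᵥ x ≤ supportFun Λ x} :=
    closedConvexHull_min (fun α hα => dotProduct_le_supportFun hΛ hα x)
      (convex_halfSpace_le ⟨fun α α' => add_dotProduct α α' x, fun c α => smul_dotProduct c α x⟩ _)
      (isClosed_le (by fun_prop) continuous_const)
  refine (isGreatest_supportFun (isCompact_closedConvexHull hΛ)
    (hne.mono subset_closedConvexHull) x).unique ⟨?_, ?_⟩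
  · exact image_mono subset_closedConvexHull (isGreatest_supportFun hΛ hne x).1
  · rintro _ ⟨α, hα, rfl⟩
    exact hhull hα

theorem isLeast_minDot (hB : IsCompact B) (hne : B.Nonempty) (v : ι → ℝ) :
    IsLeast ((v ⬝ᵥ ·) '' B) (minDot B v) :=
  (hB.image (by fun_prop)).isLeast_sInf (hne.image _)

theorem continuous_minDot (hB : IsCompact B) : Continuous (minDot B) :=
  hB.continuous_sInf (f := fun v q => v ⬝ᵥ q) (by fun_prop)

theorem exists_saddlePoint_dotProduct {X Y : Set (ι → ℝ)} (hX : IsCompact X) (hXcv : Convex ℝ X)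
    (hXne : X.Nonempty) (hY : IsCompact Y) (hYcv : Convex ℝ Y) (hYne : Y.Nonempty) :
    ∃ x₀ ∈ X, ∃ y₀ ∈ Y, ∀ x ∈ X, ∀ y ∈ Y, y ⬝ᵥ x₀ ≤ y₀ ⬝ᵥ x :=
  Sion.exists_isSaddlePointOn (f := fun x y => y ⬝ᵥ x) hXne hXcv hX
    (fun y _ => (by fun_prop : Continuous fun x : ι → ℝ => y ⬝ᵥ x).lowerSemicontinuous
      |>.lowerSemicontinuousOn _)
    (fun y _ => ((dotProductBilin ℝ ℝ y).convexOn hXcv).quasiconvexOn)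
    hYcv hYne hY
    (fun x _ => (by fun_prop : Continuous fun y : ι → ℝ => y ⬝ᵥ x).upperSemicontinuous
      |>.upperSemicontinuousOn _)
    (fun x _ => (((dotProductBilin ℝ ℝ).flip x).concaveOn hYcv).quasiconcaveOn)

end SupportFunction

theorem IsGreatest.image_iUnion {α β ι : Type*} [ConditionallyCompleteLinearOrder β] [Finite ι]
    [Nonempty ι] {f : α → β} {s : ι → Set α} {g : ι → β} (h : ∀ i, IsGreatest (f '' s i) (g i)) :
    IsGreatest (f '' ⋃ i, s i) (⨆ i, g i) := by
  obtain ⟨i₀, hi₀⟩ := exists_eq_ciSup_of_finite (f := g)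
  rw [Set.image_iUnion]
  refine ⟨mem_iUnion.2 ⟨i₀, hi₀ ▸ (h i₀).1⟩, fun y hy => ?_⟩
  obtain ⟨i, hi⟩ := mem_iUnion.1 hy
  exact ((h i).2 hi).trans (le_ciSup (Set.finite_range g).bddAbove i)

section NextValue

variable {S Z : Type*} {Λ : Set (S → ℝ)}

-- the vectors on `S × Z` all of whose slices `s' ↦ v (s', z)` lie in `Λ`
def liftSet (Λ : Set (S → ℝ)) : Set (S × Z → ℝ) :=
  (fun u i => u i.2 i.1) '' univ.pi fun _ : Z => Λ

theorem isCompact_liftSet (hΛ : IsCompact Λ) : IsCompact (liftSet (Z := Z) Λ) :=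
  (isCompact_univ_pi fun _ => hΛ).image (by fun_prop)

theorem convex_liftSet (hΛ : Convex ℝ Λ) : Convex ℝ (liftSet (Z := Z) Λ) := by
  rintro _ ⟨u₁, hu₁, rfl⟩ _ ⟨u₂, hu₂, rfl⟩ a b ha hb hab
  exact ⟨a • u₁ + b • u₂, convex_pi (fun _ _ => hΛ) hu₁ hu₂ ha hb hab, rfl⟩

theorem liftSet_nonempty (hne : Λ.Nonempty) : (liftSet (Z := Z) Λ).Nonempty :=
  (univ_pi_nonempty_iff.2 fun _ => hne).image _

variable [Fintype S] [Fintype Z]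

noncomputable def nextValue (Λ : Set (S → ℝ)) (w : S × Z → ℝ) : ℝ :=
  ∑ z, supportFun Λ fun s' => w (s', z)

theorem continuous_nextValue (hΛ : IsCompact Λ) : Continuous (nextValue (Z := Z) Λ) :=
  continuous_finsetSum _ fun _ _ => (continuous_supportFun hΛ).comp (by fun_prop)

theorem isGreatest_nextValue (hΛ : IsCompact Λ) (hne : Λ.Nonempty) (w : S × Z → ℝ) :
    IsGreatest ((· ⬝ᵥ w) '' liftSet Λ) (nextValue Λ w) := by
  have hslice : ∀ u : Z → S → ℝ,
      (fun i : S × Z => u i.2 i.1) ⬝ᵥ w = ∑ z, u z ⬝ᵥ fun s' => w (s', z) := fun u => by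
    simp only [dotProduct, Fintype.sum_prod_type]
    exact Finset.sum_comm
  choose u hu huw using fun z => (isGreatest_supportFun hΛ hne fun s' => w (s', z)).1
  refine ⟨⟨_, ⟨u, fun z _ => hu z, rfl⟩, ?_⟩, ?_⟩
  · exact (hslice u).trans (Finset.sum_congr rfl fun z _ => huw z)
  · rintro _ ⟨_, ⟨u', hu', rfl⟩, rfl⟩
    exact (hslice u').le.trans
      (Finset.sum_le_sum fun z _ => dotProduct_le_supportFun hΛ (hu' z trivial) _)

theorem exists_saddle_nextValue (hΛ : IsCompact Λ) (hΛcv : Convex ℝ Λ) (hne : Λ.Nonempty)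
    {B : S → Set (S × Z → ℝ)} (hB : ∀ s, IsCompact (B s)) (hBcv : ∀ s, Convex ℝ (B s))
    (hBne : ∀ s, (B s).Nonempty) (b : S → ℝ) :
    ∃ q₀ ∈ univ.pi B, ∃ v₀ ∈ liftSet Λ, ∀ q ∈ univ.pi B,
      nextValue Λ (∑ s, b s • q₀ s) ≤ v₀ ⬝ᵥ ∑ s, b s • q s := by
  set mix : (S → S × Z → ℝ) → S × Z → ℝ := fun q => ∑ s, b s • q s
  have hmix : IsLinearMap ℝ mix :=
    ⟨fun q q' => by simp [mix, smul_add, Finset.sum_add_distrib],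
     fun c q => by simp [mix, Finset.smul_sum, smul_comm c]⟩
  obtain ⟨_, ⟨q₀, hq₀, rfl⟩, v₀, hv₀, hsaddle⟩ := exists_saddlePoint_dotProduct
    ((isCompact_univ_pi hB).image (by fun_prop)) ((convex_pi fun s _ => hBcv s).is_linear_image hmix)
    ((univ_pi_nonempty_iff.2 hBne).image mix)
    (isCompact_liftSet hΛ) (convex_liftSet hΛcv) (liftSet_nonempty hne)
  obtain ⟨v, hv, hvq₀⟩ := (isGreatest_nextValue hΛ hne (mix q₀)).1
  exact ⟨q₀, hq₀, v₀, hv₀, fun q hq => hvq₀ ▸ hsaddle _ ⟨q, hq, rfl⟩ v hv⟩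

theorem isGreatest_sum_minDot (hΛ : IsCompact Λ) (hne : Λ.Nonempty)
    {B : S → Set (S × Z → ℝ)} (hB : ∀ s, IsCompact (B s)) (hBne : ∀ s, (B s).Nonempty)
    {b : S → ℝ} (hb : ∀ s, 0 ≤ b s) {q₀ : S → S × Z → ℝ} (hq₀ : q₀ ∈ univ.pi B)
    {v₀ : S × Z → ℝ} (hv₀ : v₀ ∈ liftSet Λ)
    (hsaddle : ∀ q ∈ univ.pi B, nextValue Λ (∑ s, b s • q₀ s) ≤ v₀ ⬝ᵥ ∑ s, b s • q s) :
    IsGreatest ((fun v => ∑ s, b s * minDot (B s) v) '' liftSet Λ)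
      (nextValue Λ (∑ s, b s • q₀ s)) := by
  have hmix : ∀ (v : S × Z → ℝ) (q : S → S × Z → ℝ),
      v ⬝ᵥ ∑ s, b s • q s = ∑ s, b s * (v ⬝ᵥ q s) := fun v q => by
    simp [dotProduct_sum, dotProduct_smul]
  have hle : ∀ v ∈ liftSet Λ, ∑ s, b s * minDot (B s) v ≤ nextValue Λ (∑ s, b s • q₀ s) :=
    fun v hv => calc
      ∑ s, b s * minDot (B s) v ≤ ∑ s, b s * (v ⬝ᵥ q₀ s) := Finset.sum_le_sum fun s _ =>
        mul_le_mul_of_nonneg_left ((isLeast_minDot (hB s) (hBne s) v).2 ⟨_, hq₀ s trivial, rfl⟩)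
          (hb s)
      _ = v ⬝ᵥ ∑ s, b s • q₀ s := (hmix v q₀).symm
      _ ≤ nextValue Λ (∑ s, b s • q₀ s) := (isGreatest_nextValue hΛ hne _).2 ⟨v, hv, rfl⟩
  choose q₁ hq₁ hq₁v₀ using fun s => (isLeast_minDot (hB s) (hBne s) v₀).1
  refine ⟨⟨v₀, hv₀, le_antisymm (hle v₀ hv₀) ?_⟩, fun _ ⟨v, hv, hvy⟩ => hvy ▸ hle v hv⟩
  calc nextValue Λ (∑ s, b s • q₀ s) ≤ v₀ ⬝ᵥ ∑ s, b s • q₁ s := hsaddle q₁ fun s _ => hq₁ s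
    _ = ∑ s, b s * minDot (B s) v₀ := by simp only [hmix, hq₁v₀]

end NextValue

theorem MeasureTheory.Measure.pi_dirac {ι : Type*} [Fintype ι] {α : ι → Type*}
    [∀ i, MeasurableSpace (α i)] (x : ∀ i, α i) :
    Measure.pi (fun i => Measure.dirac (x i)) = Measure.dirac x := by
  refine Measure.pi_eq fun s hs => ?_
  simp only [Measure.dirac_apply' _ (MeasurableSet.univ_pi hs), Measure.dirac_apply' _ (hs _),
    indicator, mem_pi, mem_univ, forall_const, Pi.one_apply, Finset.prod_boole, Finset.mem_univ]
  split_ifs <;> simp_all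

section Ambiguity

variable {S Z : Type*} [Fintype S] [Fintype Z]

theorem basSet_eq (pbar c : S × Z → ℝ) :
    BasSet pbar c = stdSimplex ℝ (S × Z) ∩ univ.pi fun i => Icc (pbar i - c i) (pbar i + c i) := by
  ext p
  simp only [BasSet, mem_inter_iff, mem_univ_pi, mem_Icc, mem_ofPred_eq, abs_sub_le_iff]
  exact and_congr_right fun _ => forall_congr' fun i => by
    constructor <;> rintro ⟨h₁, h₂⟩ <;> constructor <;> linarith

theorem isCompact_basSet (pbar c : S × Z → ℝ) : IsCompact (BasSet pbar c) :=
  basSet_eq pbar c ▸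
    (isCompact_stdSimplex ℝ _).inter_right (isClosed_set_pi fun _ _ => isClosed_Icc)

theorem convex_basSet (pbar c : S × Z → ℝ) : Convex ℝ (BasSet pbar c) :=
  basSet_eq pbar c ▸ (convex_stdSimplex ℝ _).inter (convex_pi fun _ _ => convex_Icc _ _)

theorem measurableSet_xasSet (pbar : S × Z → ℝ) : MeasurableSet (XasSet pbar) := by
  simp only [XasSet, stdSimplex, ofPred_and, ofPred_forall]
  measurability

variable {pbar c : S × Z → ℝ} {ν : Measure ((S × Z → ℝ) × (S × Z → ℝ))}

theorem ae_mem_xasSet (hν : ν ∈ DasSet pbar c) : ∀ᵐ y ∂ν, y ∈ XasSet pbar :=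
  have := hν.1
  (mem_ae_iff_prob_eq_one (measurableSet_xasSet pbar)).2 hν.2.1

theorem integrable_fst_of_mem_dasSet (hν : ν ∈ DasSet pbar c) : Integrable (fun y => y.1) ν :=
  have := hν.1
  Integrable.of_bound (by fun_prop) 1 ((ae_mem_xasSet hν).mono fun _ hy =>
    mem_closedBall_zero_iff.1 (stdSimplex_subset_closedBall hy.2.2))

theorem integral_fst_mem_basSet (hν : ν ∈ DasSet pbar c) : ∫ y, y.1 ∂ν ∈ BasSet pbar c := by
  have := hν.1
  have hX := ae_mem_xasSet hν
  have hint := (integrable_fst_of_mem_dasSet hν).eval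
  have hu := hν.2.2.1.eval
  have hcoord : ∀ i, (∫ y, y.1 ∂ν) i = ∫ y, y.1 i ∂ν := eval_integral hint
  refine ⟨⟨fun i => ?_, ?_⟩, fun i => ?_⟩
  · rw [hcoord]
    exact integral_nonneg_of_ae (hX.mono fun y hy => hy.2.2.1 i)
  · simp_rw [hcoord]
    rw [← integral_finsetSum _ fun i _ => hint i, integral_congr_ae (hX.mono fun y hy => hy.2.2.2)]
    simp
  · have hc : ∫ y, y.2 i ∂ν = c i := by rw [← eval_integral hu, hν.2.2.2]
    calc |(∫ y, y.1 ∂ν) i - pbar i| = |∫ y, (y.1 i - pbar i) ∂ν| := by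
          rw [hcoord, integral_sub (hint i) (integrable_const _), integral_const]; simp
      _ ≤ ∫ y, |y.1 i - pbar i| ∂ν := abs_integral_le_integral_abs
      _ ≤ ∫ y, y.2 i ∂ν := integral_mono_ae ((hint i).sub (integrable_const _)).abs (hu i)
          (hX.mono fun y hy => abs_sub_le_iff.2 ⟨hy.1 i, hy.2.1 i⟩)
      _ = c i := hc

theorem dirac_mem_dasSet {q : S × Z → ℝ} (hq : q ∈ BasSet pbar c) :
    Measure.dirac (q, c) ∈ DasSet pbar c :=
  ⟨inferInstance,
    Measure.dirac_apply_of_mem ⟨fun i => (abs_sub_le_iff.1 (hq.2 i)).1,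
      fun i => (abs_sub_le_iff.1 (hq.2 i)).2, hq.1⟩,
    integrable_dirac enorm_lt_top, integral_dirac _ _⟩

end Ambiguity

section ProductAmbiguity

variable {S Z : Type*} [Fintype S] [Fintype Z] {pbar c : S → S × Z → ℝ}
  {ν : S → Measure ((S × Z → ℝ) × (S × Z → ℝ))}

theorem ae_fst_mem_stdSimplex_pi (hν : ∀ s, ν s ∈ DasSet (pbar s) (c s)) :
    ∀ᵐ x ∂Measure.pi ν, ∀ s, (x s).1 ∈ stdSimplex ℝ (S × Z) := by
  have := fun s => (hν s).1
  exact ae_all_iff.2 fun s => (measurePreserving_eval ν s).quasiMeasurePreserving.ae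
    ((ae_mem_xasSet (hν s)).mono fun _ hy => hy.2.2)

theorem integrable_smul_fst_pi (hν : ∀ s, ν s ∈ DasSet (pbar s) (c s)) (t : ℝ) (s : S) :
    Integrable (fun x : S → _ => t • (x s).1) (Measure.pi ν) := by
  have := fun s => (hν s).1
  exact (integrable_comp_eval (μ := ν) (f := Prod.fst) (integrable_fst_of_mem_dasSet (hν s))).smul t

theorem integrable_sum_smul_fst_pi (hν : ∀ s, ν s ∈ DasSet (pbar s) (c s)) (b : S → ℝ) :
    Integrable (fun x : S → _ => ∑ s, b s • (x s).1) (Measure.pi ν) :=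
  integrable_finsetSum _ fun s _ => integrable_smul_fst_pi hν (b s) s

theorem integral_sum_smul_fst_pi (hν : ∀ s, ν s ∈ DasSet (pbar s) (c s)) (b : S → ℝ) :
    ∫ x, ∑ s, b s • (x s).1 ∂Measure.pi ν = ∑ s, b s • ∫ y, y.1 ∂ν s := by
  have := fun s => (hν s).1
  rw [integral_finsetSum _ fun s _ => integrable_smul_fst_pi hν (b s) s]
  refine Finset.sum_congr rfl fun s _ => ?_
  rw [integral_smul, integral_comp_eval (by fun_prop)]

theorem integrable_nextValue_sum_smul_fst_pi {Λ : Set (S → ℝ)} (hΛ : IsCompact Λ)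
    (hν : ∀ s, ν s ∈ DasSet (pbar s) (c s)) (b : S → ℝ) :
    Integrable (fun x => nextValue Λ (∑ s, b s • (x s).1)) (Measure.pi ν) := by
  have := fun s => (hν s).1
  obtain ⟨M, hM⟩ := ((isCompact_univ_pi fun _ => isCompact_stdSimplex ℝ (S × Z)).image
    (f := fun q : S → S × Z → ℝ => ∑ s, b s • q s) (by fun_prop)).exists_bound_of_continuousOn
    (continuous_nextValue hΛ).continuousOn
  exact Integrable.of_bound ((continuous_nextValue hΛ).comp_aestronglyMeasurable
    (integrable_sum_smul_fst_pi hν b).aestronglyMeasurable) M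
    ((ae_fst_mem_stdSimplex_pi hν).mono fun x hx => hM _ ⟨fun s => (x s).1, fun s _ => hx s, rfl⟩)

end ProductAmbiguity

section Bellman

variable {S Z A : Type*} [Fintype S] [Fintype Z] {Λ : Set (S → ℝ)} {V : (S → ℝ) → ℝ}
  {b : S → ℝ}

theorem bTerm_eq_supportFun (hΛ : IsCompact Λ) (hne : Λ.Nonempty)
    (hV : ∀ y ∈ stdSimplex ℝ S, V y = supportFun Λ y) (hb : b ∈ stdSimplex ℝ S)
    {q : S → S × Z → ℝ} (hq : ∀ s, q s ∈ stdSimplex ℝ (S × Z)) (z : Z) :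
    bTerm V b q z = supportFun Λ fun s' => (∑ s, b s • q s) (s', z) := by
  set w : S → ℝ := fun s' => (∑ s, b s • q s) (s', z)
  have hw : ∀ s', w s' = ∑ s, q s (s', z) * b s := fun s' => by
    simp [w, Finset.sum_apply, mul_comm]
  have hw0 : ∀ s', 0 ≤ w s' := fun s' => by
    rw [hw]; exact Finset.sum_nonneg fun s _ => mul_nonneg ((hq s).1 _) (hb.1 s)
  have hn : obsW b q z = ∑ s', w s' := by simp only [obsW, hw]; exact Finset.sum_comm
  have hupd : bUpd b q z = (obsW b q z)⁻¹ • w := funext fun s' => by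
    simp [bUpd, hw, div_eq_inv_mul]
  unfold bTerm
  split_ifs with h0
  · have : w = 0 := funext fun s' => (Finset.sum_eq_zero_iff_of_nonneg fun s' _ => hw0 s').1
      (hn ▸ h0) s' (Finset.mem_univ _)
    rw [this, ← zero_smul ℝ (0 : S → ℝ), supportFun_smul hΛ hne le_rfl, zero_mul]
  · have hpos : 0 < obsW b q z :=
      lt_of_le_of_ne (hn ▸ Finset.sum_nonneg fun s' _ => hw0 s') (Ne.symm h0)
    have hmem : bUpd b q z ∈ stdSimplex ℝ S := by
      rw [hupd]
      exact ⟨fun s' => mul_nonneg (inv_nonneg.2 hpos.le) (hw0 s'),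
        by simp [← Finset.mul_sum, ← hn, h0]⟩
    rw [hV _ hmem, hupd, ← supportFun_smul hΛ hne hpos.le, smul_inv_smul₀ h0]

theorem sum_bTerm_eq_nextValue (hΛ : IsCompact Λ) (hne : Λ.Nonempty)
    (hV : ∀ y ∈ stdSimplex ℝ S, V y = supportFun Λ y) (hb : b ∈ stdSimplex ℝ S)
    {q : S → S × Z → ℝ} (hq : ∀ s, q s ∈ stdSimplex ℝ (S × Z)) :
    ∑ z, bTerm V b q z = nextValue Λ (∑ s, b s • q s) :=
  Finset.sum_congr rfl fun z _ => bTerm_eq_supportFun hΛ hne hV hb hq z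

theorem UVal_pi_dirac (r : A → S → ℝ) (β : ℝ) (V : (S → ℝ) → ℝ) (b : S → ℝ) (a : A)
    (q c : S → S × Z → ℝ) :
    UVal r β V b a (Measure.pi fun s => Measure.dirac (q s, c s)) =
      ∑ s, b s * r a s + β * ∑ z, bTerm V b q z := by
  rw [UVal, Measure.pi_dirac (fun s => (q s, c s)), integral_dirac]

variable {pbar c : A → S → S × Z → ℝ} {r : A → S → ℝ} {β : ℝ} {a : A}

theorem UVal_pi_eq_integral_nextValue (hΛ : IsCompact Λ) (hne : Λ.Nonempty)
    (hV : ∀ y ∈ stdSimplex ℝ S, V y = supportFun Λ y) (hb : b ∈ stdSimplex ℝ S)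
    {ν : S → Measure ((S × Z → ℝ) × (S × Z → ℝ))} (hν : ∀ s, ν s ∈ DasSet (pbar a s) (c a s)) :
    UVal r β V b a (Measure.pi ν) =
      ∑ s, b s * r a s + β * ∫ x, nextValue Λ (∑ s, b s • (x s).1) ∂Measure.pi ν := by
  have := fun s => (hν s).1
  rw [UVal, integral_congr_ae ((ae_fst_mem_stdSimplex_pi hν).mono fun x hx => by
    rw [sum_bTerm_eq_nextValue hΛ hne hV hb hx]), integral_add (integrable_const _)
    ((integrable_nextValue_sum_smul_fst_pi hΛ hν b).const_mul β), integral_const_mul]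
  simp

theorem exists_le_UVal (hβ : 0 ≤ β) (hΛ : IsCompact Λ) (hne : Λ.Nonempty)
    (hV : ∀ y ∈ stdSimplex ℝ S, V y = supportFun Λ y) (hb : b ∈ stdSimplex ℝ S)
    {v : S × Z → ℝ} (hv : v ∈ liftSet Λ) {μ} (hμ : μ ∈ DaSet (pbar a) (c a)) :
    ∃ m ∈ univ.pi fun s => BasSet (pbar a s) (c a s),
      ∑ s, b s * r a s + β * (v ⬝ᵥ ∑ s, b s • m s) ≤ UVal r β V b a μ := by
  obtain ⟨ν, hν, rfl⟩ := hμ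
  refine ⟨fun s => ∫ y, y.1 ∂ν s, fun s _ => integral_fst_mem_basSet (hν s), ?_⟩
  rw [UVal_pi_eq_integral_nextValue hΛ hne hV hb hν, ← integral_sum_smul_fst_pi hν]
  gcongr
  have hint := integrable_sum_smul_fst_pi hν b
  let L := LinearMap.toContinuousLinearMap (dotProductBilin ℝ ℝ v)
  calc v ⬝ᵥ ∫ x, ∑ s, b s • (x s).1 ∂Measure.pi ν
      = ∫ x, v ⬝ᵥ ∑ s, b s • (x s).1 ∂Measure.pi ν := (L.integral_comp_comm hint).symm
    _ ≤ ∫ x, nextValue Λ (∑ s, b s • (x s).1) ∂Measure.pi ν :=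
      integral_mono (L.integrable_comp hint) (integrable_nextValue_sum_smul_fst_pi hΛ hν b)
        fun x => (isGreatest_nextValue hΛ hne _).2 ⟨v, hv, rfl⟩

noncomputable def bellmanSlopes (pbar c : A → S → S × Z → ℝ) (r : A → S → ℝ) (β : ℝ)
    (Λ : Set (S → ℝ)) (a : A) : Set (S → ℝ) :=
  (fun v s => r a s + β * minDot (BasSet (pbar a s) (c a s)) v) '' liftSet Λ

theorem isGreatest_bellmanSlopes (hpbar : ∀ s, pbar a s ∈ stdSimplex ℝ (S × Z))
    (hc : ∀ s i, 0 ≤ c a s i) (hβ : 0 ≤ β) (hΛ : IsCompact Λ) (hΛcv : Convex ℝ Λ)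
    (hne : Λ.Nonempty) (hV : ∀ y ∈ stdSimplex ℝ S, V y = supportFun Λ y)
    (hb : b ∈ stdSimplex ℝ S) :
    IsGreatest ((· ⬝ᵥ b) '' bellmanSlopes pbar c r β Λ a)
      (sInf (UVal r β V b a '' DaSet (pbar a) (c a))) := by
  have hB : ∀ s, IsCompact (BasSet (pbar a s) (c a s)) := fun s => isCompact_basSet _ _
  have hBne : ∀ s, (BasSet (pbar a s) (c a s)).Nonempty :=
    fun s => ⟨pbar a s, hpbar s, fun i => by simpa using hc s i⟩
  obtain ⟨q₀, hq₀, v₀, hv₀, hsaddle⟩ :=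
    exists_saddle_nextValue hΛ hΛcv hne hB (fun s => convex_basSet _ _) hBne b
  have hleast : IsLeast (UVal r β V b a '' DaSet (pbar a) (c a))
      (∑ s, b s * r a s + β * nextValue Λ (∑ s, b s • q₀ s)) := by
    refine ⟨⟨_, ⟨_, fun s => dirac_mem_dasSet (hq₀ s trivial), rfl⟩, ?_⟩, ?_⟩
    · rw [UVal_pi_dirac, sum_bTerm_eq_nextValue hΛ hne hV hb fun s => (hq₀ s trivial).1]
    · rintro _ ⟨μ, hμ, rfl⟩
      obtain ⟨m, hm, hle⟩ := exists_le_UVal hβ hΛ hne hV hb hv₀ hμ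
      exact le_trans (by gcongr; exact hsaddle m hm) hle
  have hslopes : (· ⬝ᵥ b) '' bellmanSlopes pbar c r β Λ a =
      (fun v => ∑ s, b s * r a s + β * ∑ s, b s * minDot (BasSet (pbar a s) (c a s)) v) ''
        liftSet Λ := by
    simp only [bellmanSlopes, image_image]
    refine image_congr fun v _ => ?_
    simp only [dotProduct, Finset.mul_sum, ← Finset.sum_add_distrib]
    exact Finset.sum_congr rfl fun s _ => by ring
  have hmono : Monotone fun x => ∑ s, b s * r a s + β * x := fun _ _ h => by dsimp only; gcongr
  rw [hleast.csInf_eq, hslopes]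
  simpa only [image_image] using
    hmono.map_isGreatest (isGreatest_sum_minDot hΛ hne hB hBne hb.1 hq₀ hv₀ hsaddle)

theorem exists_supportFun_Lop [Fintype A] [Nonempty A]
    (hpbar : ∀ a s, pbar a s ∈ stdSimplex ℝ (S × Z)) (hc : ∀ a s i, 0 ≤ c a s i) (hβ : 0 ≤ β)
    (hΛ : IsCompact Λ) (hΛcv : Convex ℝ Λ) (hne : Λ.Nonempty)
    (hV : ∀ y ∈ stdSimplex ℝ S, V y = supportFun Λ y) :
    ∃ Λ' : Set (S → ℝ), IsCompact Λ' ∧ Convex ℝ Λ' ∧ Λ'.Nonempty ∧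
      ∀ b ∈ stdSimplex ℝ S, Lop pbar c r β V b = supportFun Λ' b := by
  set Λ₀ := ⋃ a, bellmanSlopes pbar c r β Λ a
  have hΛ₀ : IsCompact Λ₀ := isCompact_iUnion fun a => (isCompact_liftSet hΛ).image <|
    continuous_pi fun s => continuous_const.add <| continuous_const.mul <|
      continuous_minDot (isCompact_basSet _ _)
  have hΛ₀ne : Λ₀.Nonempty :=
    ((liftSet_nonempty hne).image _).mono (subset_iUnion _ (Classical.arbitrary A))
  refine ⟨closedConvexHull ℝ Λ₀, isCompact_closedConvexHull hΛ₀, convex_closedConvexHull,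
    hΛ₀ne.mono subset_closedConvexHull, fun b hb => ?_⟩
  rw [supportFun_closedConvexHull hΛ₀ hΛ₀ne]
  exact (IsGreatest.image_iUnion fun a =>
    isGreatest_bellmanSlopes (hpbar a) (hc a) hβ hΛ hΛcv hne hV hb).csSup_eq.symm

end Bellman

theorem finite_horizon_value_pwlc_general {S Z A : Type*} [Fintype S]
    [Fintype Z] [Fintype A] [Nonempty A]
    (pbar c : A → S → (S × Z) → ℝ)
    (hpbar : ∀ a s, pbar a s ∈ stdSimplex ℝ (S × Z))
    (hc : ∀ a s i, 0 ≤ c a s i)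
    (r : A → S → ℝ) (β : ℝ) (hβ0 : 0 < β)
    (T : ℕ)
    (Vt : ℕ → (S → ℝ) → ℝ)
    (hVT : ∀ b, Vt T b = 0)
    (hrec : ∀ t, 1 ≤ t → t + 1 ≤ T → Vt t = Lop pbar c r β (Vt (t + 1))) :
    ∀ t, 1 ≤ t → t ≤ T →
      (∃ M, ∀ b ∈ stdSimplex ℝ S, |Vt t b| ≤ M) ∧
      (∃ Λ : Set (S → ℝ), ∀ b ∈ stdSimplex ℝ S,
        Vt t b = sSup ((fun α => ∑ s, α s * b s) '' Λ)) ∧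
      ConvexOn ℝ (stdSimplex ℝ S) (Vt t) := by
  intro t ht htT
  obtain ⟨Λ, hΛ, -, hne, hV⟩ : ∃ Λ : Set (S → ℝ), IsCompact Λ ∧ Convex ℝ Λ ∧ Λ.Nonempty ∧
      ∀ b ∈ stdSimplex ℝ S, Vt t b = supportFun Λ b := by
    refine Nat.decreasingInduction' (fun k hkT htk ih => ?_) htT
      ⟨{0}, isCompact_singleton, convex_singleton 0, singleton_nonempty 0,
        fun b _ => by simp [hVT, supportFun]⟩
    obtain ⟨Λ, hΛ, hΛcv, hne, hV⟩ := ih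
    rw [hrec k (ht.trans htk) hkT]
    exact exists_supportFun_Lop hpbar hc hβ0.le hΛ hΛcv hne hV
  obtain ⟨M, hM⟩ := (isCompact_stdSimplex ℝ S).exists_bound_of_continuousOn
    (continuous_supportFun hΛ).continuousOn
  refine ⟨⟨M, fun b hb => by rw [hV b hb]; exact hM b hb⟩, ⟨Λ, hV⟩, ?_⟩
  exact ((convexOn_supportFun hΛ hne).subset (subset_univ _) (convex_stdSimplex ℝ S)).congr
    fun b hb => (hV b hb).symm

/-- For a finite horizon `T ≥ 1`, the value functions defined by `V^T ≡ 0` and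
`V^t = L V^{t+1}` are bounded on `Δ(S)` and each admits a set `Λ^t ⊆ ℝ^S` of slopes with
`V^t(b) = sup_{α ∈ Λ^t} ⟨α, b⟩` on `Δ(S)`; in particular each `V^t` is convex in the belief. -/
theorem finite_horizon_value_pwlc {S Z A : Type*} [Fintype S] [Nonempty S]
    [Fintype Z] [Nonempty Z] [Fintype A] [Nonempty A]
    (pbar c : A → S → (S × Z) → ℝ)
    (hpbar : ∀ a s, pbar a s ∈ stdSimplex ℝ (S × Z))
    (hc : ∀ a s i, 0 ≤ c a s i)
    (r : A → S → ℝ) (β : ℝ) (hβ0 : 0 < β) (hβ1 : β < 1)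
    (T : ℕ) (hT : 1 ≤ T)
    (Vt : ℕ → (S → ℝ) → ℝ)
    (hVT : ∀ b, Vt T b = 0)
    (hrec : ∀ t, 1 ≤ t → t + 1 ≤ T → Vt t = Lop pbar c r β (Vt (t + 1))) :
    ∀ t, 1 ≤ t → t ≤ T →
      (∃ M, ∀ b ∈ stdSimplex ℝ S, |Vt t b| ≤ M) ∧
      (∃ Λ : Set (S → ℝ), ∀ b ∈ stdSimplex ℝ S,
        Vt t b = sSup ((fun α => ∑ s, α s * b s) '' Λ)) ∧
      ConvexOn ℝ (stdSimplex ℝ S) (Vt t) :=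
  finite_horizon_value_pwlc_general pbar c hpbar hc r β hβ0 T Vt hVT hrec
end

section
/- Fix a ∈ A, b ∈ Δ(S), and vectors α_z ∈ ℝ^S for each z ∈ Z. Consider the linear program: maximize Σ_{s∈S} [ ⟨c_{as}, ρ_s⟩ + b_s r_{as} − ⟨p̄_{as}, κ¹_s⟩ + ⟨p̄_{as}, κ²_s⟩ + σ_s ] over variables κ¹_s, κ²_s ∈ ℝ^{S×Z} with κ¹_s ≥ 0, κ²_s ≥ 0, σ_s ∈ ℝ, and ρ_s ∈ ℝ^{S×Z} for each s ∈ S, subject to: for every s ∈ S and every (s',z) ∈ S×Z, β b_s α_z(s') + κ¹_s(s',z) − κ²_s(s',z) − σ_s ≥ 0, and κ¹_s + κ²_s + ρ_s = 0. Then the optimal value of this linear program is attained and equals Σ_{s∈S} b_s Ξ_{as}, where Ξ_{as} = r_{as} + min { β Σ_{(s',z)∈S×Z} α_z(s') p(s',z) : p ∈ B_{as} }. -/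
open MeasureTheory

open Matrix

/-! For each state `s` the inner minimisation is a linear program over a box-constrained
simplex `Δ ∩ [p̄ - c, p̄ + c]` with weights `w = β b_s α`, and the given program is the sum over `s`
of the duals of these programs (after eliminating `ρ_s = -(κ¹_s + κ²_s)`), so it suffices to
prove LP duality for a single box-constrained simplex. Weak duality holds term by term. For
strong duality take a minimiser `p` (the feasible set is compact). Shifting mass from `j` to `i`
shows `w j ≤ w i` whenever `p i` is below its upper bound and `p j` is above its lower bound and
positive, so a threshold `σ` separates the two groups of weights; then `κ¹ = (σ - w)⁺` and
`κ² = (w - σ)⁺` (on the support of `p`) satisfy complementary slackness. -/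

theorem exists_forall_le_and_le {ι α : Type*} [Finite ι] [LinearOrder α] [Nonempty α]
    {P Q : ι → Prop} (w : ι → α) (h : ∀ i j, P i → Q j → w i ≤ w j) :
    ∃ σ, (∀ i, P i → w i ≤ σ) ∧ ∀ j, Q j → σ ≤ w j := by
  rcases {i | P i}.eq_empty_or_nonempty with hP | hP
  · obtain ⟨m, hm⟩ := (Set.finite_range w).bddBelow
    exact ⟨m, fun i hi => (Set.eq_empty_iff_forall_notMem.1 hP i hi).elim,
      fun j _ => hm ⟨j, rfl⟩⟩
  · obtain ⟨i₀, hi₀, hmax⟩ := Set.exists_max_image _ w (Set.toFinite _) hP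
    exact ⟨w i₀, hmax, fun j hj => h i₀ j hi₀ hj⟩

section BoxSimplex

variable {I : Type*} [Fintype I] {lo hi w p κ₁ κ₂ : I → ℝ} {σ : ℝ}

theorem isCompact_stdSimplex_inter_Icc (lo hi : I → ℝ) :
    IsCompact (stdSimplex ℝ I ∩ Set.Icc lo hi) :=
  (isCompact_stdSimplex ℝ I).inter_right isClosed_Icc

theorem sub_dotProduct_add_dotProduct_eq_sum (hp : ∑ i, p i = 1) :
    σ - hi ⬝ᵥ κ₁ + lo ⬝ᵥ κ₂ = ∑ i, (σ * p i - hi i * κ₁ i + lo i * κ₂ i) := by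
  simp only [Finset.sum_add_distrib, Finset.sum_sub_distrib, ← Finset.mul_sum, hp, mul_one,
    dotProduct]

theorem sub_dotProduct_add_dotProduct_le_dotProduct (hp : p ∈ stdSimplex ℝ I ∩ Set.Icc lo hi)
    (hκ₁ : ∀ i, 0 ≤ κ₁ i) (hκ₂ : ∀ i, 0 ≤ κ₂ i) (hσ : ∀ i, 0 ≤ w i + κ₁ i - κ₂ i - σ) :
    σ - hi ⬝ᵥ κ₁ + lo ⬝ᵥ κ₂ ≤ w ⬝ᵥ p := by
  obtain ⟨⟨hp₀, hp₁⟩, hlo, hhi⟩ := hp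
  rw [sub_dotProduct_add_dotProduct_eq_sum hp₁]
  refine Finset.sum_le_sum fun i _ => ?_
  nlinarith [mul_nonneg (sub_nonneg.2 (hhi i)) (hκ₁ i), mul_nonneg (sub_nonneg.2 (hlo i)) (hκ₂ i),
    mul_nonneg (hp₀ i) (hσ i)]

theorem le_of_isMinOn_dotProduct (hp : p ∈ stdSimplex ℝ I ∩ Set.Icc lo hi)
    (hmin : IsMinOn (w ⬝ᵥ ·) (stdSimplex ℝ I ∩ Set.Icc lo hi) p) {i j : I}
    (hi_lt : p i < hi i) (hlo_lt : lo j < p j) (hpj : 0 < p j) : w j ≤ w i := by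
  classical
  obtain rfl | hij := eq_or_ne i j
  · rfl
  obtain ⟨⟨hp₀, hp₁⟩, hlo, hhi⟩ := hp
  set ε := min (hi i - p i) (min (p j - lo j) (p j))
  have hε : 0 < ε := lt_min (by linarith) (lt_min (by linarith) hpj)
  have hεi : ε ≤ hi i - p i := min_le_left _ _
  have hεj : ε ≤ p j - lo j := (min_le_right _ _).trans (min_le_left _ _)
  have hεj' : ε ≤ p j := (min_le_right _ _).trans (min_le_right _ _)
  set q := p + ε • (Pi.single i 1 - Pi.single j 1)
  have hq : ∀ k, q k = if k = i then p i + ε else if k = j then p j - ε else p k := by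
    intro k
    obtain rfl | hki := eq_or_ne k i
    · simp [q, hij]
    obtain rfl | hkj := eq_or_ne k j <;> simp [q, sub_eq_add_neg, *]
  have hq_bounds : ∀ k, 0 ≤ q k ∧ lo k ≤ q k ∧ q k ≤ hi k := by
    intro k
    rw [hq]
    split_ifs with h₁ h₂ <;> (try subst h₁) <;> (try subst h₂) <;>
      exact ⟨by linarith [hp₀ k], by linarith [hlo k], by linarith [hhi k]⟩
  have hqK : q ∈ stdSimplex ℝ I ∩ Set.Icc lo hi :=
    ⟨⟨fun k => (hq_bounds k).1, by simp [q, Finset.sum_add_distrib, ← Finset.mul_sum, hp₁]⟩,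
      fun k => (hq_bounds k).2.1, fun k => (hq_bounds k).2.2⟩
  have hwq : w ⬝ᵥ q = w ⬝ᵥ p + ε * (w i - w j) := by
    simp [q, dotProduct_add, dotProduct_smul, dotProduct_sub, dotProduct_single]
  have hpq : w ⬝ᵥ p ≤ w ⬝ᵥ q := hmin hqK
  nlinarith

theorem exists_dual_eq_of_isMinOn (hp : p ∈ stdSimplex ℝ I ∩ Set.Icc lo hi)
    (hmin : IsMinOn (w ⬝ᵥ ·) (stdSimplex ℝ I ∩ Set.Icc lo hi) p) :
    ∃ κ₁ κ₂ : I → ℝ, ∃ σ : ℝ, (∀ i, 0 ≤ κ₁ i) ∧ (∀ i, 0 ≤ κ₂ i) ∧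
      (∀ i, 0 ≤ w i + κ₁ i - κ₂ i - σ) ∧ σ - hi ⬝ᵥ κ₁ + lo ⬝ᵥ κ₂ = w ⬝ᵥ p := by
  classical
  obtain ⟨σ, hmass, hroom⟩ := exists_forall_le_and_le (P := fun j => lo j < p j ∧ 0 < p j)
    (Q := fun i => p i < hi i) w fun j i hj hi => le_of_isMinOn_dotProduct hp hmin hi hj.1 hj.2
  obtain ⟨⟨hp₀, hp₁⟩, hlo, hhi⟩ := hp
  refine ⟨fun i => max (σ - w i) 0, fun i => if 0 < p i then max (w i - σ) 0 else 0, σ,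
    fun i => le_max_right _ _, fun i => ?_, fun i => ?_, ?_⟩
  · dsimp only; split_ifs <;> simp
  · dsimp only; split_ifs <;> rcases le_total σ (w i) with h | h <;> simp [h]
  · rw [sub_dotProduct_add_dotProduct_eq_sum hp₁]
    refine Finset.sum_congr rfl fun i _ => ?_
    rcases lt_trichotomy (w i) σ with h | rfl | h
    · have : p i = hi i := (hhi i).antisymm (not_lt.1 fun h' => (hroom i h').not_gt h)
      simp only [h.le, max_eq_left, sub_nonneg, max_eq_right, sub_nonpos, ite_self, this]
      ring
    · simp
    · have hp_lo : 0 < p i → p i = lo i := fun hpi =>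
        ((hlo i).antisymm (not_lt.1 fun h' => (hmass i ⟨h', hpi⟩).not_gt h)).symm
      simp only [h.le, max_eq_left, sub_nonneg, max_eq_right, sub_nonpos]
      split_ifs with hpi
      · rw [hp_lo hpi]; ring
      · rw [((hp₀ i).antisymm (not_lt.1 hpi)).symm]; ring

theorem add_sub_dotProduct_eq_of_add_add_eq_zero {pbar c ρ : I → ℝ} (hρ : κ₁ + κ₂ + ρ = 0)
    (x : ℝ) :
    c ⬝ᵥ ρ + x - pbar ⬝ᵥ κ₁ + pbar ⬝ᵥ κ₂ + σ =
      x + (σ - (pbar + c) ⬝ᵥ κ₁ + (pbar - c) ⬝ᵥ κ₂) := by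
  rw [eq_neg_of_add_eq_zero_right hρ]
  simp only [dotProduct_neg, dotProduct_add, add_dotProduct, sub_dotProduct]
  ring

end BoxSimplex

theorem BasSet_eq_inter_Icc {S Z : Type*} [Fintype S] [Fintype Z] (pbar c : S × Z → ℝ) :
    BasSet pbar c = stdSimplex ℝ (S × Z) ∩ Set.Icc (pbar - c) (pbar + c) := by
  ext p
  simp only [BasSet, Set.mem_ofPred_eq, Set.mem_inter_iff, Set.mem_Icc, Pi.le_def, abs_le,
    Pi.sub_apply, Pi.add_apply, forall_and]
  constructor <;> rintro ⟨h, h₁, h₂⟩ <;>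
    exact ⟨h, fun i => by linarith [h₁ i], fun i => by linarith [h₂ i]⟩

theorem lp_dual_value_general {S Z A : Type*} [Fintype S] [Fintype Z]
    (pbar c : A → S → (S × Z) → ℝ)
    (hpbar : ∀ a s, pbar a s ∈ stdSimplex ℝ (S × Z))
    (hc : ∀ a s i, 0 ≤ c a s i)
    (r : A → S → ℝ) (β : ℝ)
    (a : A) (b : S → ℝ) (hb : b ∈ stdSimplex ℝ S) (α : Z → S → ℝ) :
    IsGreatest
      {v : ℝ | ∃ κ1 κ2 ρ : S → (S × Z) → ℝ, ∃ σ : S → ℝ,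
        (∀ s i, 0 ≤ κ1 s i) ∧ (∀ s i, 0 ≤ κ2 s i) ∧
        (∀ (s : S) (i : S × Z), 0 ≤ β * b s * α i.2 i.1 + κ1 s i - κ2 s i - σ s) ∧
        (∀ s, κ1 s + κ2 s + ρ s = 0) ∧
        v = ∑ s, ((∑ i, c a s i * ρ s i) + b s * r a s
              - (∑ i, pbar a s i * κ1 s i) + (∑ i, pbar a s i * κ2 s i) + σ s)}
      (∑ s, b s * (r a s +
        sInf ((fun p => β * ∑ i : S × Z, α i.2 i.1 * p i) '' BasSet (pbar a s) (c a s)))) := by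
  set f : (S × Z → ℝ) → ℝ := fun p => β * ∑ i : S × Z, α i.2 i.1 * p i
  set w : S → S × Z → ℝ := fun s i => β * b s * α i.2 i.1
  have hw : ∀ s q, w s ⬝ᵥ q = b s * f q := fun s q => by
    simp only [w, f, dotProduct, Finset.mul_sum, mul_assoc, mul_left_comm]
  simp only [BasSet_eq_inter_Icc]
  have hne : ∀ s,
      (stdSimplex ℝ (S × Z) ∩ Set.Icc (pbar a s - c a s) (pbar a s + c a s)).Nonempty :=
    fun s => ⟨pbar a s, hpbar a s, sub_le_self _ (hc a s), le_add_of_nonneg_right (hc a s)⟩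
  choose p hpK hpmin using fun s => (isCompact_stdSimplex_inter_Icc _ _).exists_isMinOn (hne s)
    (show Continuous f by fun_prop).continuousOn
  have hinf : ∀ s, sInf (f '' _) = f (p s) := fun s =>
    IsLeast.csInf_eq ⟨Set.mem_image_of_mem f (hpK s), Set.forall_mem_image.2 (hpmin s)⟩
  have hwmin : ∀ s, IsMinOn (w s ⬝ᵥ ·) _ (p s) := fun s q hq => by
    simp only [Set.mem_ofPred_eq, hw]
    exact mul_le_mul_of_nonneg_left (hpmin s hq) (hb.1 s)
  simp only [hinf]
  refine ⟨?_, ?_⟩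
  · choose κ₁ κ₂ σ hκ₁ hκ₂ hσ hval using fun s => exists_dual_eq_of_isMinOn (hpK s) (hwmin s)
    refine ⟨κ₁, κ₂, fun s => -(κ₁ s + κ₂ s), σ, hκ₁, hκ₂, hσ, fun s => add_neg_cancel _,
      Finset.sum_congr rfl fun s _ => ?_⟩
    refine Eq.trans ?_ (add_sub_dotProduct_eq_of_add_add_eq_zero (add_neg_cancel _) _).symm
    rw [hval, hw, mul_add]
  · rintro v ⟨κ₁, κ₂, ρ, σ, hκ₁, hκ₂, hσ, hρ, rfl⟩
    refine Finset.sum_le_sum fun s _ =>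
      (add_sub_dotProduct_eq_of_add_add_eq_zero (hρ s) _).trans_le ?_
    rw [mul_add, ← hw]
    exact add_le_add_right
      (sub_dotProduct_add_dotProduct_le_dotProduct (hpK s) (hκ₁ s) (hκ₂ s) (hσ s)) _

/-- The dual linear program of the inner minimization attains its optimal value,
which equals `Σ_s b_s Ξ_{as}` with `Ξ_{as} = r_{as} + min { β Σ_{(s',z)} α_z(s') p(s',z) : p ∈ B_{as} }`. -/
theorem lp_dual_value {S Z A : Type*} [Fintype S] [Nonempty S]
    [Fintype Z] [Nonempty Z] [Fintype A] [Nonempty A]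
    (pbar c : A → S → (S × Z) → ℝ)
    (hpbar : ∀ a s, pbar a s ∈ stdSimplex ℝ (S × Z))
    (hc : ∀ a s i, 0 ≤ c a s i)
    (r : A → S → ℝ) (β : ℝ) (hβ0 : 0 < β) (hβ1 : β < 1)
    (a : A) (b : S → ℝ) (hb : b ∈ stdSimplex ℝ S) (α : Z → S → ℝ) :
    IsGreatest
      {v : ℝ | ∃ κ1 κ2 ρ : S → (S × Z) → ℝ, ∃ σ : S → ℝ,
        (∀ s i, 0 ≤ κ1 s i) ∧ (∀ s i, 0 ≤ κ2 s i) ∧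
        (∀ (s : S) (i : S × Z), 0 ≤ β * b s * α i.2 i.1 + κ1 s i - κ2 s i - σ s) ∧
        (∀ s, κ1 s + κ2 s + ρ s = 0) ∧
        v = ∑ s, ((∑ i, c a s i * ρ s i) + b s * r a s
              - (∑ i, pbar a s i * κ1 s i) + (∑ i, pbar a s i * κ2 s i) + σ s)}
      (∑ s, b s * (r a s +
        sInf ((fun p => β * ∑ i : S × Z, α i.2 i.1 * p i) '' BasSet (pbar a s) (c a s)))) :=
  lp_dual_value_general pbar c hpbar hc r β a b hb α
end
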